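/- Let M→N be a matroid perspective on a finite linearly ordered ground set E. Then for all elements x, u, y, v, z of a commutative ring, the following identity holds: Σ_{A⊆E} (x+u−1)^{r(N)−r_N(A)} · (y+v−1)^{|A|−r_M(A)} · z^{(r(M)−r_M(A))−(r(N)−r_N(A))} = Σ_{A⊆E} x^{|Int_N(A)|} · u^{|P_N(A)|} · y^{|Ext_M(A)|} · v^{|Q_M(A)|} · z^{(r(M)−r_M(A))−(r(N)−r_N(A))}, where all exponents are nonnegative integers (in particular (r(M)−r_M(A))−(r(N)−r_N(A)) ≥ 0 since M→N is a perspective). -/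

import Mathlib

/-- A circuit of a matroid: a minimal dependent set. -/
def Matroid.IsCircuit' {α : Type*} (M : Matroid α) (C : Set α) : Prop :=
  M.Dep C ∧ ∀ D, M.Dep D → D ⊆ C → D = C

/-- A cocircuit of a matroid: a circuit of the dual matroid. -/
def Matroid.IsCocircuit' {α : Type*} (M : Matroid α) (C : Set α) : Prop :=
  M✶.IsCircuit' C

/-- The rank of a set in a matroid: the largest cardinality of an independent subset. -/
noncomputable def Matroid.rk' {α : Type*} (M : Matroid α) (A : Set α) : ℕ :=
  sSup {n : ℕ | ∃ I, I ⊆ A ∧ M.Indep I ∧ I.ncard = n}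

/-- `e` is the minimum element of the set `C`. -/
def IsMinOf {α : Type*} [LinearOrder α] (C : Set α) (e : α) : Prop :=
  e ∈ C ∧ ∀ x ∈ C, e ≤ x

/-- `Int_M(A)`: internally active elements of `A` w.r.t. `M`
(the ground set is the whole type, so `E ∖ A = Aᶜ`). -/
def IntSet {α : Type*} [LinearOrder α] (M : Matroid α) (A : Set α) : Set α :=
  {e | e ∈ A ∧ ∃ C, M.IsCocircuit' C ∧ C ⊆ Aᶜ ∪ {e} ∧ IsMinOf C e}

/-- `Ext_M(A)`: externally active elements w.r.t. `M`. -/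
def ExtSet {α : Type*} [LinearOrder α] (M : Matroid α) (A : Set α) : Set α :=
  {e | e ∉ A ∧ ∃ C, M.IsCircuit' C ∧ C ⊆ A ∪ {e} ∧ IsMinOf C e}

/-- `P_M(A)`: smallest elements of cocircuits of `M` contained in `E ∖ A`. -/
def PActSet {α : Type*} [LinearOrder α] (M : Matroid α) (A : Set α) : Set α :=
  {e | e ∉ A ∧ ∃ C, M.IsCocircuit' C ∧ C ⊆ Aᶜ ∧ IsMinOf C e}

/-- `Q_M(A)`: smallest elements of circuits of `M` contained in `A`. -/
def QActSet {α : Type*} [LinearOrder α] (M : Matroid α) (A : Set α) : Set α :=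
  {e | e ∈ A ∧ ∃ C, M.IsCircuit' C ∧ C ⊆ A ∧ IsMinOf C e}

/-!
Las Vergnas' interval decomposition. Call `B` a pseudo-base if it is independent in `M` and
spanning in `N`. Every `A ⊆ E` can be written uniquely as `(B \ S) ∪ T` with `B` a pseudo-base,
`S ⊆ Int_N(B)` and `T ⊆ Ext_M(B)`, namely with `S = P_N(A)`, `T = Q_M(A)` and
`B = (A \ Q_M(A)) ∪ P_N(A)`. Along such an interval `Int_N(A) = Int_N(B) \ S`,
`Ext_M(A) = Ext_M(B) \ T`, `r_N(A) = r(N) - |S|` and `r_M(A) = |B| - |S|`, so by the binomial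
theorem over `S` and `T` both sides equal `∑_B (x+u)^|Int_N(B)| (y+v)^|Ext_M(B)| z^(r(M)-|B|)`.

In terms of closures, `Ext_M(A) ∪ Q_M(A)` is the set of elements spanned in `M` by the elements
of `A` above them, and `Int_N(A) ∪ P_N(A)` the set of elements not spanned in `N` by the other
elements of `A` together with all smaller elements. The perspective enters only through
`cl_M(X) ⊆ cl_N(X)`, which makes both sets constant on each interval.
-/

open Set

namespace Finset

lemma sum_sum_mul_mul {ι κ R : Type*} [CommSemiring R] (s : Finset ι) (t : Finset κ)
    (f : ι → R) (g : κ → R) (w : R) :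
    ∑ i ∈ s, ∑ j ∈ t, f i * g j * w = (∑ i ∈ s, f i) * (∑ j ∈ t, g j) * w := by
  rw [sum_mul_sum, sum_mul]
  simp_rw [sum_mul]

lemma sum_powerset_pow {ι R : Type*} [CommSemiring R] (s : Finset ι) (a : R) :
    ∑ t ∈ s.powerset, a ^ t.card = (a + 1) ^ s.card := by
  simpa using sum_pow_mul_eq_add_pow a 1 s

end Finset

namespace Matroid

variable {α : Type*} {M N : Matroid α} {C K I X Y : Set α} {e : α}

lemma closure_subset_closure_of_forall_isFlat (hE : M.E = N.E)
    (h : ∀ F, N.IsFlat F → M.IsFlat F) (X : Set α) : M.closure X ⊆ N.closure X := by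
  rw [closure_def, closure_def, hE]
  exact sInter_subset_sInter fun F ⟨hF, hXF⟩ => ⟨h F hF, hXF⟩

lemma isCircuit'_iff : M.IsCircuit' C ↔ M.IsCircuit C := by
  rw [isCircuit_def, Minimal]
  exact and_congr_right fun _ => forall_congr' fun D => imp_congr_right fun hD =>
    ⟨fun h hDC => (h hDC).symm.subset, fun h hDC => (h hDC).antisymm' hDC⟩

lemma isCocircuit'_iff : M.IsCocircuit' K ↔ M.IsCocircuit K :=
  isCircuit'_iff

lemma notMem_closure_iff_exists_isCocircuit (he : e ∈ M.E) (hX : X ⊆ M.E := by aesop_mat) :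
    e ∉ M.closure X ↔ ∃ K, M.IsCocircuit K ∧ e ∈ K ∧ Disjoint K X := by
  refine ⟨fun heX => ?_, fun ⟨K, hK, heK, hKX⟩ heX => ?_⟩
  · obtain ⟨I, hI⟩ := M.exists_isBasis X
    have heI : e ∉ M.closure I := hI.closure_eq_closure ▸ heX
    obtain ⟨B, hB, hIB⟩ :=
      ((hI.indep.insert_indep_iff).2 (.inl ⟨he, heI⟩)).exists_isBase_superset
    have heB : e ∈ B := hIB (mem_insert e I)
    refine ⟨M.E \ M.closure (B \ {e}), hB.compl_closure_sdiff_singleton_isCocircuit heB,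
      ⟨he, hB.indep.notMem_closure_sdiff_of_mem heB⟩, disjoint_left.2 fun f hf hfX => hf.2 ?_⟩
    refine M.closure_subset_closure (subset_sdiff_singleton ((subset_insert e I).trans hIB) ?_)
      (hI.subset_closure hfX)
    exact fun heI' => heI (M.mem_closure_of_mem' heI')
  · obtain ⟨C, hCX, hC, heC⟩ := (mem_closure_iff_exists_isCircuit (disjoint_left.1 hKX heK)).1 heX
    refine hC.inter_isCocircuit_ne_singleton hK (e := e) (subset_antisymm ?_ (by simp [heC, heK]))
    rintro f ⟨hfC, hfK⟩
    exact (hCX hfC).resolve_right (disjoint_left.1 hKX hfK)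

section Rank

variable [Finite α]

lemma IsBasis'.rk'_eq (hI : M.IsBasis' I X) : M.rk' X = I.ncard := by
  refine IsGreatest.csSup_eq ⟨⟨I, hI.subset, hI.indep, rfl⟩, ?_⟩
  rintro n ⟨J, hJX, hJ, rfl⟩
  obtain ⟨J', hJ', hJJ'⟩ := hJ.subset_isBasis'_of_subset hJX
  calc J.ncard ≤ J'.ncard := ncard_le_ncard hJJ'
    _ = I.ncard := by rw [ncard_def, ncard_def, hJ'.encard_eq_encard hI]

lemma Indep.rk'_eq (hI : M.Indep I) (hIX : I ⊆ X) (hXI : X ⊆ M.closure I) :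
    M.rk' X = I.ncard :=
  (hI.isBasis_of_subset_of_subset_closure hIX hXI).isBasis'.rk'_eq

lemma Indep.ncard_le_rk' (hI : M.Indep I) (hIX : I ⊆ X) : I.ncard ≤ M.rk' X := by
  obtain ⟨J, hJ, hIJ⟩ := hI.subset_isBasis'_of_subset hIX
  exact hJ.rk'_eq ▸ ncard_le_ncard hIJ

end Rank

section Order

variable [LinearOrder α]

def spannedAbove (M : Matroid α) (X : Set α) : Set α :=
  {e | e ∈ M.closure (X ∩ Ioi e)}

def unspannedBelow (M : Matroid α) (X : Set α) : Set α :=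
  {e | e ∉ M.closure ((X \ {e}) ∪ Iio e)}

def pseudoBase (M N : Matroid α) (A : Set α) : Set α :=
  (A \ QActSet M A) ∪ PActSet N A

lemma exists_isCircuit'_isMinOf_iff :
    (∃ C, M.IsCircuit' C ∧ C ⊆ insert e X ∧ IsMinOf C e) ↔ e ∈ M.spannedAbove X := by
  have he : e ∉ X ∩ Ioi e := fun h => lt_irrefl e h.2
  simp only [spannedAbove, mem_ofPred_eq, mem_closure_iff_exists_isCircuit he, isCircuit'_iff]
  constructor
  · rintro ⟨C, hC, hCX, heC, hmin⟩
    refine ⟨C, fun f hf => ?_, hC, heC⟩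
    obtain rfl | hfe := eq_or_ne f e
    · exact mem_insert f _
    exact .inr ⟨(hCX hf).resolve_left hfe, lt_of_le_of_ne (hmin f hf) hfe.symm⟩
  · rintro ⟨C, hCX, hC, heC⟩
    refine ⟨C, hC, hCX.trans (insert_subset_insert inter_subset_left), heC, fun f hf => ?_⟩
    rcases hCX hf with rfl | hf
    exacts [le_rfl, hf.2.le]

lemma exists_isCocircuit'_isMinOf_iff (hM : M.E = univ) :
    (∃ K, M.IsCocircuit' K ∧ K ⊆ insert e Xᶜ ∧ IsMinOf K e) ↔ e ∈ M.unspannedBelow X := by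
  simp only [unspannedBelow, mem_ofPred_eq, isCocircuit'_iff,
    notMem_closure_iff_exists_isCocircuit (hM ▸ mem_univ e) (hM ▸ subset_univ _)]
  refine exists_congr fun K => and_congr_right fun _ => ?_
  simp only [IsMinOf, subset_def, disjoint_left, mem_insert_iff, mem_compl_iff, mem_union,
    mem_sdiff, mem_singleton_iff, mem_Iio, not_or, not_and, not_not, not_lt]
  grind

lemma extSet_eq : ExtSet M X = M.spannedAbove X \ X := by
  ext e
  simp only [ExtSet, mem_ofPred_eq, mem_sdiff, union_singleton, ← exists_isCircuit'_isMinOf_iff]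
  grind

lemma qActSet_eq : QActSet M X = X ∩ M.spannedAbove X := by
  ext e
  simp only [QActSet, mem_ofPred_eq, mem_inter_iff, ← exists_isCircuit'_isMinOf_iff]
  exact and_congr_right fun he => by rw [insert_eq_of_mem he]

lemma intSet_eq (hM : M.E = univ) : IntSet M X = X ∩ M.unspannedBelow X := by
  ext e
  simp only [IntSet, mem_ofPred_eq, mem_inter_iff, union_singleton,
    exists_isCocircuit'_isMinOf_iff hM]

lemma pActSet_eq (hM : M.E = univ) : PActSet M X = M.unspannedBelow X \ X := by
  ext e
  simp only [PActSet, mem_ofPred_eq, mem_sdiff, ← exists_isCocircuit'_isMinOf_iff hM, and_comm]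
  exact and_congr_right fun he => by rw [insert_eq_of_mem (show e ∈ Xᶜ from he)]

lemma Indep.extSet_eq_spannedAbove (hI : M.Indep I) : ExtSet M I = M.spannedAbove I := by
  refine extSet_eq.trans (sdiff_eq_left.2 (disjoint_left.2 fun e he heI => ?_))
  exact hI.notMem_closure_sdiff_of_mem heI
    (M.closure_subset_closure (fun x (hx : x ∈ I ∩ Ioi e) => (⟨hx.1, hx.2.ne'⟩ : x ∈ I \ {e})) he)

lemma intSet_eq_unspannedBelow (hM : M.E = univ) (hI : M.closure I = univ) :
    IntSet M I = M.unspannedBelow I := by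
  refine (intSet_eq hM).trans (inter_eq_right.2 fun e he => ?_)
  by_contra heI
  refine he (M.closure_subset_closure (fun x hx => .inl ⟨hx, ?_⟩) (hI ▸ mem_univ e))
  exact fun hxe => heI (hxe ▸ hx)

lemma pseudoBase_sdiff_union {A : Set α} :
    pseudoBase M N A \ PActSet N A ∪ QActSet M A = A := by
  ext x
  have hP : x ∈ PActSet N A → x ∉ A := fun h => h.1
  have hQ : x ∈ QActSet M A → x ∈ A := fun h => h.1
  simp only [pseudoBase, mem_union, mem_sdiff]
  tauto

lemma spannedAbove_mono (h : X ⊆ Y) : M.spannedAbove X ⊆ M.spannedAbove Y :=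
  fun _ he => M.closure_subset_closure (inter_subset_inter_left _ h) he

lemma unspannedBelow_anti (h : X ⊆ Y) : M.unspannedBelow Y ⊆ M.unspannedBelow X :=
  fun _ he hX =>
    he (M.closure_subset_closure (union_subset_union_left _ (sdiff_subset_sdiff_left h)) hX)

/-- An exchange argument removing the elements of `Y` one at a time, largest first. -/
lemma mem_closure_of_mem_closure_union (hY : Y.Finite) (he : e ∈ M.closure (X ∪ Y))
    (hYX : ∀ y ∈ Y, y ∉ M.closure (insert e X ∪ (Y ∩ Iio y))) : e ∈ M.closure X := by
  classical
  lift Y to Finset α using hY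
  induction Y using Finset.induction_on_max with
  | empty => simpa using he
  | insert a s has ih =>
    rw [Finset.coe_insert] at he hYX
    refine ih ?_ fun y hy => ?_
    · by_contra hes
      rw [union_insert] at he
      have hsa : insert a (s : Set α) ∩ Iio a = s := by
        ext x
        simp only [mem_inter_iff, mem_insert_iff, mem_Iio, Finset.mem_coe]
        exact ⟨fun ⟨hx, hxa⟩ => hx.resolve_left hxa.ne, fun hx => ⟨.inr hx, has x hx⟩⟩
      refine hYX a (mem_insert a _) ?_
      rw [hsa, insert_union]
      exact (closure_exchange ⟨he, hes⟩).1
    · exact fun h => hYX y (mem_insert_of_mem _ hy) (M.closure_subset_closure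
        (union_subset_union_right _ (inter_subset_inter_left _ (subset_insert _ _))) h)

section Perspective

variable {B S T : Set α} (hMN : ∀ X, M.closure X ⊆ N.closure X)
include hMN

lemma spannedAbove_subset_closure (hN : N.E = univ) (e : α) :
    M.spannedAbove B ⊆ N.closure ((B \ {e}) ∪ Iio e) := by
  intro x hx
  obtain hxe | hex := lt_or_ge x e
  · exact N.subset_closure _ (hN ▸ subset_univ _) (.inr hxe)
  · exact N.closure_subset_closure (fun y hy => .inl ⟨hy.1, (hex.trans_lt hy.2).ne'⟩) (hMN _ hx)

lemma unspannedBelow_subset_of_subset_union (hN : N.E = univ)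
    (hX : X ⊆ B ∪ M.spannedAbove B) : N.unspannedBelow B ⊆ N.unspannedBelow X := by
  intro e he hcl
  refine he (N.closure_subset_closure_of_subset_closure ?_ hcl)
  rintro x (⟨hxX, hxe⟩ | hx)
  · rcases hX hxX with hxB | hxB
    · exact N.subset_closure _ (hN ▸ subset_univ _) (.inl ⟨hxB, hxe⟩)
    · exact spannedAbove_subset_closure hMN hN e hxB
  · exact N.subset_closure _ (hN ▸ subset_univ _) (.inr hx)

omit hMN in
lemma spannedAbove_subset_of_subset_union (hM : M.E = univ)
    (hX : X ⊆ B ∪ M.spannedAbove B) : M.spannedAbove X ⊆ M.spannedAbove B := by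
  intro e he
  refine M.closure_subset_closure_of_subset_closure ?_ he
  rintro x ⟨hxX, hex⟩
  rcases hX hxX with hxB | hxB
  · exact M.subset_closure _ (hM ▸ subset_univ _) ⟨hxB, hex⟩
  · exact M.closure_subset_closure (inter_subset_inter_right _ (Ioi_subset_Ioi hex.le)) hxB

variable [Finite α]

lemma spannedAbove_subset_spannedAbove_sdiff (hS : S ⊆ N.unspannedBelow B) :
    M.spannedAbove B ⊆ M.spannedAbove (B \ S) := by
  intro e he
  refine mem_closure_of_mem_closure_union (Y := S ∩ Ioi e) (toFinite _)
    (M.closure_subset_closure ?_ he) fun y hy h => hS hy.1 (hMN _ (M.closure_subset_closure ?_ h))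
  · rintro x ⟨hxB, hxe⟩
    by_cases hxS : x ∈ S
    exacts [.inr ⟨hxS, hxe⟩, .inl ⟨⟨hxB, hxS⟩, hxe⟩]
  · rintro x ((rfl | hx) | hx)
    · exact .inr hy.2
    · exact .inl ⟨hx.1.1, fun hxy => hx.1.2 (mem_singleton_iff.1 hxy ▸ hy.1)⟩
    · exact .inr hx.2

lemma unspannedBelow_sdiff_union_subset (hN : N.E = univ) (hS : S ⊆ N.unspannedBelow B)
    (hT : T ⊆ M.spannedAbove B) : N.unspannedBelow (B \ S ∪ T) ⊆ N.unspannedBelow B := by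
  intro e he hcl
  refine he (mem_closure_of_mem_closure_union (Y := S ∩ Ioi e) (toFinite _)
    (N.closure_subset_closure ?_ hcl)
    fun y hy h => hS hy.1 (N.closure_subset_closure_of_subset_closure ?_ h))
  · rintro x (⟨hxB, hxe⟩ | hx)
    · by_cases hxS : x ∈ S
      · obtain hlt | hgt := lt_or_gt_of_ne (show x ≠ e from hxe)
        exacts [.inl (.inr hlt), .inr ⟨hxS, hgt⟩]
      · exact .inl (.inl ⟨.inl ⟨hxB, hxS⟩, hxe⟩)
    · exact .inl (.inr hx)
  · have hsub : (B \ {y}) ∪ Iio y ⊆ N.closure ((B \ {y}) ∪ Iio y) :=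
      N.subset_closure _ (hN ▸ subset_univ _)
    rintro x ((rfl | (⟨⟨hxB, hxS⟩ | hxT, -⟩ | hx)) | hx)
    · exact hsub (mem_union_right _ hy.2)
    · exact hsub (mem_union_left _ ⟨hxB, fun hxy => hxS (mem_singleton_iff.1 hxy ▸ hy.1)⟩)
    · exact spannedAbove_subset_closure hMN hN y (hT hxT)
    · exact hsub (mem_union_right _ (hx.trans hy.2))
    · exact hsub (mem_union_right _ hx.2)

lemma spannedAbove_sdiff_union (hM : M.E = univ) (hS : S ⊆ N.unspannedBelow B)
    (hT : T ⊆ M.spannedAbove B) : M.spannedAbove (B \ S ∪ T) = M.spannedAbove B :=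
  (spannedAbove_subset_of_subset_union hM (union_subset_union sdiff_subset hT)).antisymm
    ((spannedAbove_subset_spannedAbove_sdiff hMN hS).trans (spannedAbove_mono subset_union_left))

lemma unspannedBelow_sdiff_union (hN : N.E = univ) (hS : S ⊆ N.unspannedBelow B)
    (hT : T ⊆ M.spannedAbove B) : N.unspannedBelow (B \ S ∪ T) = N.unspannedBelow B :=
  (unspannedBelow_sdiff_union_subset hMN hN hS hT).antisymm
    (unspannedBelow_subset_of_subset_union hMN hN (union_subset_union sdiff_subset hT))

end Perspective

variable [Finite α]

lemma inter_Ioi_subset_closure_sdiff_spannedAbove (hM : M.E = univ) (e : α) :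
    X ∩ Ioi e ⊆ M.closure ((X \ M.spannedAbove X) ∩ Ioi e) := by
  induction e using WellFoundedGT.induction with | _ e ih
  rintro x ⟨hxX, hex⟩
  by_cases hx : x ∈ M.spannedAbove X
  · exact M.closure_subset_closure (inter_subset_inter_right _ (Ioi_subset_Ioi hex.le))
      (M.closure_subset_closure_of_subset_closure (ih x hex) hx)
  · exact M.subset_closure _ (hM ▸ subset_univ _) ⟨⟨hxX, hx⟩, hex⟩

lemma spannedAbove_sdiff_spannedAbove (hM : M.E = univ) :
    M.spannedAbove (X \ M.spannedAbove X) = M.spannedAbove X :=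
  (spannedAbove_mono sdiff_subset).antisymm fun e he =>
    M.closure_subset_closure_of_subset_closure (inter_Ioi_subset_closure_sdiff_spannedAbove hM e) he

lemma subset_closure_sdiff_spannedAbove (hM : M.E = univ) :
    X ⊆ M.closure (X \ M.spannedAbove X) := by
  intro x hxX
  by_cases hx : x ∈ M.spannedAbove X
  · rw [← spannedAbove_sdiff_spannedAbove hM] at hx
    exact M.closure_subset_closure inter_subset_left hx
  · exact M.subset_closure _ (hM ▸ subset_univ _) ⟨hxX, hx⟩

lemma indep_sdiff_spannedAbove (hM : M.E = univ) : M.Indep (X \ M.spannedAbove X) := by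
  rw [indep_iff_forall_subset_not_isCircuit (hM ▸ subset_univ _)]
  intro C hCX hC
  obtain ⟨m, hmC, hmin⟩ := exists_min_image C id (toFinite C) hC.nonempty
  refine (hCX hmC).2 (M.closure_subset_closure ?_ (hC.mem_closure_sdiff_singleton_of_mem hmC))
  rintro x ⟨hxC, hxm⟩
  exact ⟨(hCX hxC).1, lt_of_le_of_ne (hmin x hxC) (Ne.symm hxm)⟩

lemma closure_union_unspannedBelow (hM : M.E = univ) :
    M.closure (X ∪ M.unspannedBelow X) = univ := by
  refine eq_univ_of_forall fun e => ?_
  induction e using WellFoundedLT.induction with | _ e ih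
  by_cases he : e ∈ X ∪ M.unspannedBelow X
  · exact M.subset_closure _ (hM ▸ subset_univ _) he
  · have hcl : e ∈ M.closure ((X \ {e}) ∪ Iio e) := not_not.1 (not_or.1 he).2
    refine M.closure_subset_closure_of_subset_closure ?_ hcl
    rintro x (hx | hx)
    exacts [M.subset_closure _ (hM ▸ subset_univ _) (.inl hx.1), ih x hx]

lemma Indep.union_indep_of_subset_unspannedBelow (hMN : ∀ X, M.closure X ⊆ N.closure X)
    (hM : M.E = univ) (hI : M.Indep I) (hIX : I ⊆ X) (hY : Y ⊆ N.unspannedBelow X \ X) :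
    M.Indep (I ∪ Y) := by
  rw [indep_iff_forall_subset_not_isCircuit (hM ▸ subset_univ _)]
  intro C hCIY hC
  by_cases hCY : (C ∩ Y).Nonempty
  · obtain ⟨m, ⟨hmC, hmY⟩, hmax⟩ := exists_max_image (C ∩ Y) id (toFinite _) hCY
    refine (hY hmY).1 (hMN _ (M.closure_subset_closure ?_
      (hC.mem_closure_sdiff_singleton_of_mem hmC)))
    rintro x ⟨hxC, hxm⟩
    rcases hCIY hxC with hxI | hxY
    · exact .inl ⟨hIX hxI, hxm⟩
    · exact .inr (lt_of_le_of_ne (hmax x ⟨hxC, hxY⟩) hxm)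
  · exact hC.dep.not_indep (hI.subset fun x hxC =>
      (hCIY hxC).resolve_right fun hxY => hCY ⟨x, hxC, hxY⟩)

lemma subset_unspannedBelow_union (hY : Y ⊆ M.unspannedBelow X \ X) :
    Y ⊆ M.unspannedBelow (X ∪ Y) := by
  intro p hp hcl
  refine (hY hp).1 (mem_closure_of_mem_closure_union (Y := Y ∩ Ioi p) (toFinite _)
    (M.closure_subset_closure ?_ hcl) fun y hy => ?_)
  · rintro x ((⟨hxX | hxY, hxp⟩) | hx)
    · exact .inl (.inl ⟨hxX, hxp⟩)
    · obtain hlt | hgt := lt_or_gt_of_ne hxp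
      exacts [.inl (.inr hlt), .inr ⟨hxY, hgt⟩]
    · exact .inl (.inr hx)
  · refine fun h => (hY hy.1).1 (M.closure_subset_closure ?_ h)
    rintro x ((rfl | (hx | hx)) | hx)
    · exact .inr hy.2
    · exact .inl ⟨hx.1, fun hxy => (hY hy.1).2 (hxy ▸ hx.1)⟩
    · exact .inr (lt_trans hx hy.2)
    · exact .inr hx.2

section Interval

variable {B S T : Set α}

lemma unspannedBelow_sdiff_union_eq_intSet (hN : N.E = univ)
    (hMN : ∀ X, M.closure X ⊆ N.closure X) (hBN : N.closure B = univ) (hS : S ⊆ IntSet N B)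
    (hT : T ⊆ ExtSet M B) : N.unspannedBelow (B \ S ∪ T) = IntSet N B := by
  rw [intSet_eq_unspannedBelow hN hBN] at hS ⊢
  exact unspannedBelow_sdiff_union hMN hN hS (hT.trans (extSet_eq (M := M) ▸ sdiff_subset))

lemma spannedAbove_sdiff_union_eq_extSet (hM : M.E = univ) (hN : N.E = univ)
    (hMN : ∀ X, M.closure X ⊆ N.closure X) (hB : M.Indep B) (hS : S ⊆ IntSet N B)
    (hT : T ⊆ ExtSet M B) : M.spannedAbove (B \ S ∪ T) = ExtSet M B := by
  rw [hB.extSet_eq_spannedAbove] at hT ⊢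
  exact spannedAbove_sdiff_union hMN hM (hS.trans (intSet_eq hN ▸ inter_subset_right)) hT

variable (hM : M.E = univ) (hN : N.E = univ) (hMN : ∀ X, M.closure X ⊆ N.closure X)
  (hB : M.Indep B) (hBN : N.closure B = univ) (hS : S ⊆ IntSet N B) (hT : T ⊆ ExtSet M B)
include hN hMN hS hT

include hBN in
lemma intSet_sdiff_union : IntSet N (B \ S ∪ T) = IntSet N B \ S := by
  rw [intSet_eq hN, unspannedBelow_sdiff_union_eq_intSet hN hMN hBN hS hT]
  ext x
  have := @hS x; have := @hT x
  have : x ∈ IntSet N B → x ∈ B := fun h => h.1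
  have : x ∈ ExtSet M B → x ∉ B := fun h => h.1
  simp only [mem_inter_iff, mem_union, mem_sdiff]
  tauto

include hBN in
lemma pActSet_sdiff_union : PActSet N (B \ S ∪ T) = S := by
  rw [pActSet_eq hN, unspannedBelow_sdiff_union_eq_intSet hN hMN hBN hS hT]
  ext x
  have := @hS x; have := @hT x
  have : x ∈ IntSet N B → x ∈ B := fun h => h.1
  have : x ∈ ExtSet M B → x ∉ B := fun h => h.1
  simp only [mem_union, mem_sdiff]
  tauto

include hM hB in
lemma extSet_sdiff_union : ExtSet M (B \ S ∪ T) = ExtSet M B \ T := by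
  rw [extSet_eq, spannedAbove_sdiff_union_eq_extSet hM hN hMN hB hS hT]
  ext x
  have := @hS x; have := @hT x
  have : x ∈ IntSet N B → x ∈ B := fun h => h.1
  have : x ∈ ExtSet M B → x ∉ B := fun h => h.1
  simp only [mem_union, mem_sdiff]
  tauto

include hM hB in
lemma qActSet_sdiff_union : QActSet M (B \ S ∪ T) = T := by
  rw [qActSet_eq, spannedAbove_sdiff_union_eq_extSet hM hN hMN hB hS hT]
  ext x
  have := @hS x; have := @hT x
  have : x ∈ IntSet N B → x ∈ B := fun h => h.1
  have : x ∈ ExtSet M B → x ∉ B := fun h => h.1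
  simp only [mem_inter_iff, mem_union, mem_sdiff]
  tauto

include hM hB hBN in
lemma pseudoBase_sdiff_union_eq : pseudoBase M N (B \ S ∪ T) = B := by
  rw [pseudoBase, qActSet_sdiff_union hM hN hMN hB hS hT,
    pActSet_sdiff_union hN hMN hBN hS hT]
  ext x
  have : x ∈ S → x ∈ B := fun h => (hS h).1
  have : x ∈ T → x ∉ B := fun h => (hT h).1
  simp only [mem_union, mem_sdiff]
  tauto

include hM hB in
lemma rk'_sdiff_union : M.rk' (B \ S ∪ T) = (B \ S).ncard := by
  have hbasis : (B \ S ∪ T) \ M.spannedAbove (B \ S ∪ T) = B \ S := by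
    rw [← sdiff_inter_self_eq_sdiff, inter_comm, ← qActSet_eq,
      qActSet_sdiff_union hM hN hMN hB hS hT, union_sdiff_right, sdiff_eq_left]
    exact disjoint_right.2 fun x hxT hxB => (hT hxT).1 hxB.1
  have hspan := subset_closure_sdiff_spannedAbove hM (X := B \ S ∪ T)
  rw [hbasis] at hspan
  exact (hB.subset sdiff_subset).rk'_eq subset_union_left hspan

include hBN in
lemma rk'_sdiff_union_add_ncard : N.rk' (B \ S ∪ T) + S.ncard = N.rk' univ := by
  obtain ⟨I, hI⟩ := N.exists_isBasis' (B \ S ∪ T)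
  have hSP : S ⊆ N.unspannedBelow (B \ S ∪ T) \ (B \ S ∪ T) := by
    rw [← pActSet_eq hN, pActSet_sdiff_union hN hMN hBN hS hT]
  have hIS := hI.indep.union_indep_of_subset_unspannedBelow (fun _ => subset_rfl) hN hI.subset hSP
  have hspan : univ ⊆ N.closure (I ∪ S) := by
    rw [← hBN]
    refine N.closure_subset_closure_of_subset_closure fun x hxB => ?_
    by_cases hxS : x ∈ S
    · exact N.subset_closure _ (hN ▸ subset_univ _) (.inr hxS)
    · refine N.closure_subset_closure subset_union_left ?_
      rw [hI.closure_eq_closure]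
      exact N.subset_closure _ (hN ▸ subset_univ _) (.inl ⟨hxB, hxS⟩)
  rw [hI.rk'_eq, hIS.rk'_eq (subset_univ _) hspan,
    ncard_union_eq (disjoint_right.2 fun x hxS hxI => (hSP hxS).2 (hI.subset hxI))]

include hBN in
lemma rk'_univ_sub_rk'_sdiff_union : N.rk' univ - N.rk' (B \ S ∪ T) = S.ncard := by
  have := rk'_sdiff_union_add_ncard hN hMN hBN hS hT
  omega

include hM hB in
lemma ncard_sub_rk'_sdiff_union : (B \ S ∪ T).ncard - M.rk' (B \ S ∪ T) = T.ncard := by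
  rw [rk'_sdiff_union hM hN hMN hB hS hT,
    ncard_union_eq (disjoint_right.2 fun x hxT hxB => (hT hxT).1 hxB.1)]
  omega

include hM hB hBN in
lemma rk'_sub_sub_rk'_sdiff_union :
    (M.rk' univ - M.rk' (B \ S ∪ T)) - (N.rk' univ - N.rk' (B \ S ∪ T)) =
      M.rk' univ - B.ncard := by
  have hBr := hB.ncard_le_rk' (subset_univ B)
  have hBS := ncard_sdiff_add_ncard_of_subset fun x hx => (hS hx).1
  rw [rk'_univ_sub_rk'_sdiff_union hN hMN hBN hS hT, rk'_sdiff_union hM hN hMN hB hS hT]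
  omega

end Interval

section ActivityBase

variable {A : Set α} (hM : M.E = univ) (hN : N.E = univ) (hMN : ∀ X, M.closure X ⊆ N.closure X)
include hM hN hMN

lemma indep_pseudoBase : M.Indep (pseudoBase M N A) := by
  rw [pseudoBase, qActSet_eq, sdiff_self_inter, pActSet_eq hN]
  exact (indep_sdiff_spannedAbove hM).union_indep_of_subset_unspannedBelow hMN hM sdiff_subset
    subset_rfl

lemma closure_pseudoBase : N.closure (pseudoBase M N A) = univ := by
  rw [pseudoBase, qActSet_eq, sdiff_self_inter, pActSet_eq hN]
  refine eq_univ_of_univ_subset ?_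
  rw [← closure_union_unspannedBelow hN (X := A)]
  refine N.closure_subset_closure_of_subset_closure fun x hx => ?_
  by_cases hxA : x ∈ A
  · exact hMN _ (M.closure_subset_closure subset_union_left
      (subset_closure_sdiff_spannedAbove hM hxA))
  · exact N.subset_closure _ (hN ▸ subset_univ _) (.inr ⟨hx.resolve_left hxA, hxA⟩)

omit hM hMN in
lemma pActSet_subset_intSet_pseudoBase : PActSet N A ⊆ IntSet N (pseudoBase M N A) := by
  rw [intSet_eq hN, pseudoBase]
  refine subset_inter subset_union_right ?_
  rw [pActSet_eq hN]
  exact (subset_unspannedBelow_union subset_rfl).trans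
    (unspannedBelow_anti (union_subset_union_left _ sdiff_subset))

omit hN hMN in
lemma qActSet_subset_extSet_pseudoBase : QActSet M A ⊆ ExtSet M (pseudoBase M N A) := by
  intro x hx
  rw [extSet_eq, pseudoBase]
  refine ⟨?_, ?_⟩
  · refine spannedAbove_mono ?_ ((spannedAbove_sdiff_spannedAbove hM).symm.subset
      (qActSet_eq (M := M) ▸ hx).2)
    rw [qActSet_eq, sdiff_self_inter]
    exact subset_union_left
  · rintro (⟨-, hxQ⟩ | hxP)
    exacts [hxQ hx, hxP.1 hx.1]

end ActivityBase

end Order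

section Fintype

open Finset

variable [Fintype α] [LinearOrder α]

open Classical in
lemma sum_eq_sum_sdiff_union {β : Type*} [AddCommMonoid β] (hM : M.E = univ) (hN : N.E = univ)
    (hMN : ∀ X, M.closure X ⊆ N.closure X) (f : Finset α → β) :
    ∑ A, f A = ∑ B ∈ univ.filter (fun B : Finset α => M.Indep ↑B ∧ N.closure ↑B = univ),
      ∑ S ∈ (IntSet N ↑B).toFinset.powerset, ∑ T ∈ (ExtSet M ↑B).toFinset.powerset,
        f (B \ S ∪ T) := by
  have hinv : ∀ A : Finset α, (pseudoBase M N ↑A).toFinset \ (PActSet N ↑A).toFinset ∪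
      (QActSet M ↑A).toFinset = A := fun A => coe_injective (by
    simp only [coe_union, coe_sdiff, Set.coe_toFinset]
    exact pseudoBase_sdiff_union)
  rw [sum_sigma', sum_sigma']
  refine sum_nbij' (fun A => ⟨⟨(pseudoBase M N ↑A).toFinset, (PActSet N ↑A).toFinset⟩,
      (QActSet M ↑A).toFinset⟩) (fun p => p.1.1 \ p.1.2 ∪ p.2) ?_ (fun _ _ => Finset.mem_univ _)
      (fun A _ => hinv A) ?_ (fun A _ => by rw [hinv])
  · intro A _
    simp only [mem_sigma, mem_filter, Finset.mem_univ, true_and, Finset.mem_powerset,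
      Set.coe_toFinset, Set.toFinset_subset_toFinset]
    exact ⟨⟨⟨indep_pseudoBase hM hN hMN, closure_pseudoBase hM hN hMN⟩,
      pActSet_subset_intSet_pseudoBase hN⟩, qActSet_subset_extSet_pseudoBase hM⟩
  · rintro ⟨⟨B, S⟩, T⟩ hp
    simp only [mem_sigma, mem_filter, Finset.mem_univ, true_and, Finset.mem_powerset,
      Set.subset_toFinset] at hp
    obtain ⟨⟨⟨hB, hBN⟩, hS⟩, hT⟩ := hp
    have hA : ((B \ S ∪ T : Finset α) : Set α) = ↑B \ ↑S ∪ ↑T := by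
      simp only [coe_union, coe_sdiff]
    simp only [hA, pseudoBase_sdiff_union_eq hM hN hMN hB hBN hS hT,
      pActSet_sdiff_union hN hMN hBN hS hT, qActSet_sdiff_union hM hN hMN hB hS hT,
      toFinset_coe]

section Summands

variable {B S T : Finset α} (hM : M.E = univ) (hN : N.E = univ)
  (hMN : ∀ X, M.closure X ⊆ N.closure X) (hB : M.Indep ↑B) (hBN : N.closure ↑B = univ)
  (hS : ↑S ⊆ IntSet N ↑B) (hT : ↑T ⊆ ExtSet M ↑B) {R : Type*} [CommRing R]
include hM hN hMN hB hBN hS hT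

lemma rankSummand_sdiff_union (a b w : R) :
    a ^ (N.rk' univ - N.rk' ↑(B \ S ∪ T)) * b ^ ((B \ S ∪ T).card - M.rk' ↑(B \ S ∪ T)) *
        w ^ ((M.rk' univ - M.rk' ↑(B \ S ∪ T)) - (N.rk' univ - N.rk' ↑(B \ S ∪ T))) =
      a ^ S.card * b ^ T.card * w ^ (M.rk' univ - B.card) := by
  rw [← ncard_coe_finset (B \ S ∪ T)]
  simp only [coe_union, coe_sdiff]
  rw [rk'_sub_sub_rk'_sdiff_union hM hN hMN hB hBN hS hT,
    rk'_univ_sub_rk'_sdiff_union hN hMN hBN hS hT,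
    ncard_sub_rk'_sdiff_union hM hN hMN hB hS hT]
  simp only [ncard_coe_finset]

open Classical in
lemma activitySummand_sdiff_union (x u y v w : R) :
    x ^ (IntSet N ↑(B \ S ∪ T)).ncard * u ^ (PActSet N ↑(B \ S ∪ T)).ncard *
        y ^ (ExtSet M ↑(B \ S ∪ T)).ncard * v ^ (QActSet M ↑(B \ S ∪ T)).ncard *
        w ^ ((M.rk' univ - M.rk' ↑(B \ S ∪ T)) - (N.rk' univ - N.rk' ↑(B \ S ∪ T))) =
      u ^ S.card * x ^ ((IntSet N ↑B).toFinset.card - S.card) *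
        (v ^ T.card * y ^ ((ExtSet M ↑B).toFinset.card - T.card)) *
        w ^ (M.rk' univ - B.card) := by
  simp only [coe_union, coe_sdiff]
  rw [intSet_sdiff_union hN hMN hBN hS hT, pActSet_sdiff_union hN hMN hBN hS hT,
    extSet_sdiff_union hM hN hMN hB hS hT, qActSet_sdiff_union hM hN hMN hB hS hT,
    rk'_sub_sub_rk'_sdiff_union hM hN hMN hB hBN hS hT, ncard_sdiff hS, ncard_sdiff hT,
    ncard_eq_toFinset_card' (IntSet N ↑B), ncard_eq_toFinset_card' (ExtSet M ↑B)]
  simp only [ncard_coe_finset]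
  ring

end Summands

end Fintype

end Matroid

open Matroid in
/-- The 5-variable expansion of the Tutte polynomial of a matroid perspective:
`t(M,N; x+u, y+v, z)` equals the sum over subsets `A` of
`x^|Int_N(A)| u^|P_N(A)| y^|Ext_M(A)| v^|Q_M(A)| z^{(r(M)−r_M(A))−(r(N)−r_N(A))}`. -/
theorem stmt2 {α : Type*} [Fintype α] [LinearOrder α] (M N : Matroid α)
    (hME : M.E = Set.univ) (hNE : N.E = Set.univ)
    (hMN : ∀ F, N.IsFlat F → M.IsFlat F)
    {R : Type*} [CommRing R] (x u y v z : R) :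
    ∑ A : Finset α,
        (x + u - 1) ^ (N.rk' Set.univ - N.rk' ↑A) *
          (y + v - 1) ^ (A.card - M.rk' ↑A) *
          z ^ ((M.rk' Set.univ - M.rk' ↑A) - (N.rk' Set.univ - N.rk' ↑A)) =
      ∑ A : Finset α,
        x ^ (IntSet N ↑A).ncard * u ^ (PActSet N ↑A).ncard *
          y ^ (ExtSet M ↑A).ncard * v ^ (QActSet M ↑A).ncard *
          z ^ ((M.rk' Set.univ - M.rk' ↑A) - (N.rk' Set.univ - N.rk' ↑A)) := by
  classical
  have hcl := closure_subset_closure_of_forall_isFlat (hME.trans hNE.symm) hMN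
  rw [sum_eq_sum_sdiff_union hME hNE hcl, sum_eq_sum_sdiff_union hME hNE hcl]
  refine Finset.sum_congr rfl fun B hB => ?_
  obtain ⟨hBi, hBN⟩ := (Finset.mem_filter.1 hB).2
  have hsub {s : Set α} {S : Finset α} (h : S ∈ s.toFinset.powerset) : ↑S ⊆ s :=
    Set.subset_toFinset.1 (Finset.mem_powerset.1 h)
  set I := (IntSet N ↑B).toFinset
  set E := (ExtSet M ↑B).toFinset
  calc _ = ∑ S ∈ I.powerset, ∑ T ∈ E.powerset,
        (x + u - 1) ^ S.card * (y + v - 1) ^ T.card * z ^ (M.rk' Set.univ - B.card) :=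
      Finset.sum_congr rfl fun S hS => Finset.sum_congr rfl fun T hT =>
        rankSummand_sdiff_union hME hNE hcl hBi hBN (hsub hS) (hsub hT) _ _ _
    _ = ∑ S ∈ I.powerset, ∑ T ∈ E.powerset, u ^ S.card * x ^ (I.card - S.card) *
        (v ^ T.card * y ^ (E.card - T.card)) * z ^ (M.rk' Set.univ - B.card) := by
      rw [Finset.sum_sum_mul_mul, Finset.sum_sum_mul_mul, Finset.sum_powerset_pow,
        Finset.sum_powerset_pow, Finset.sum_pow_mul_eq_add_pow, Finset.sum_pow_mul_eq_add_pow]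
      ring
    _ = _ := (Finset.sum_congr rfl fun S hS => Finset.sum_congr rfl fun T hT =>
        activitySummand_sdiff_union hME hNE hcl hBi hBN (hsub hS) (hsub hT) _ _ _ _ _).symm
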